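/- In the quasi-braid group J_4, the pure quasi-braid p = α_{(1,2,3)} α_{(1,2)} α_{(3,4)} α_{(1,2,3)} α_{(1,2,3,4)} satisfies φ(p) = 1 in Σ_4 and ℓ_4(p) = 1 mod 2, where ℓ_4 is the length homomorphism. -/

import Mathlib

/-- Generators of the quasi-braid group `J_n`: intervals `{p.1,...,p.2}` (0-indexed)
of at least two points inside `{0,...,n-1}`, corresponding to the connected subsets
`{σ_{p.1+1},...,σ_{p.2}}` of the Coxeter generators of `Σ_n`. -/
def IntervalGen (n : ℕ) : Type := {p : ℕ × ℕ // p.1 < p.2 ∧ p.2 < n}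

/-- The action `j_T T' = ω_T T' ω_T` on subintervals: if `T' = {c,...,d} ⊆ T = {a,...,b}`
then `j_T T' = {a+b-d,...,a+b-c}`; otherwise it is defined to be `T'`. -/
def jmap {n : ℕ} (T T' : IntervalGen n) : IntervalGen n :=
  if h : T.1.1 ≤ T'.1.1 ∧ T'.1.2 ≤ T.1.2 then
    ⟨(T.1.1 + T.1.2 - T'.1.2, T.1.1 + T.1.2 - T'.1.1), by
      obtain ⟨h1, h2⟩ := T.2; obtain ⟨h3, h4⟩ := T'.2; constructor <;> omega⟩
  else T'

/-- The defining relations of the quasi-braid group `J_n`: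
`α_T² = 1`; `α_T α_{T'} = α_{j_T T'} α_T` for `T' ⊆ T`; and `α_T α_{T'} = α_{T'} α_T`
when the intervals `T` and `T'` are disjoint and non-adjacent. -/
def QBRels (n : ℕ) : Set (FreeGroup (IntervalGen n)) :=
  {w | (∃ T : IntervalGen n, w = FreeGroup.of T * FreeGroup.of T) ∨
    (∃ T T' : IntervalGen n, T.1.1 ≤ T'.1.1 ∧ T'.1.2 ≤ T.1.2 ∧
      w = FreeGroup.of T * FreeGroup.of T' * (FreeGroup.of (jmap T T'))⁻¹ *
        (FreeGroup.of T)⁻¹) ∨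
    (∃ T T' : IntervalGen n, T.1.2 + 1 < T'.1.1 ∧
      w = FreeGroup.of T * FreeGroup.of T' * (FreeGroup.of T)⁻¹ * (FreeGroup.of T')⁻¹)}

/-- The quasi-braid group `J_n`, presented by generators `α_T` and the quasi-braid
relations. -/
abbrev J (n : ℕ) : Type := PresentedGroup (QBRels n)


/-- The underlying map of the reversal of the (0-indexed) interval `{a,...,b}` in `Fin n`. -/
def revFun (n a b : ℕ) (k : Fin n) : Fin n :=
  if h : a ≤ (k : ℕ) ∧ (k : ℕ) ≤ b ∧ b < n then ⟨a + b - (k : ℕ), by omega⟩ else k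

lemma revFun_involutive (n a b : ℕ) : Function.Involutive (revFun n a b) := by
  intro k
  unfold revFun
  by_cases h : a ≤ (k : ℕ) ∧ (k : ℕ) ≤ b ∧ b < n
  · rw [dif_pos h, dif_pos (by simp; omega)]
    ext
    simp
    omega
  · rw [dif_neg h, dif_neg h]

/-- The reversal permutation `ω_{(a,...,b)}` of the interval `{a,...,b}` in `Σ_n`:
the longest element of the parabolic subgroup generated by the corresponding
Coxeter generators. -/
def revPerm (n a b : ℕ) : Equiv.Perm (Fin n) :=
  Function.Involutive.toPerm (revFun n a b) (revFun_involutive n a b)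

/-- in `J_4`, the pure quasi-braid
`p = α_{(1,2,3)} α_{(1,2)} α_{(3,4)} α_{(1,2,3)} α_{(1,2,3,4)}` (0-indexed intervals
`(0,2), (0,1), (2,3), (0,2), (0,3)`) satisfies `φ(p) = 1` in `Σ_4` and `ℓ_4(p) = 1 mod 2`,
where `φ : J_4 → Σ_4` sends `α_T` to the interval reversal `ω_T` and `ℓ_4 : J_4 → ℤ/2ℤ`
is the length homomorphism of the paper, with `ℓ_4(α_{(i,...,j)}) = 1 + (j - i + 1)`
(so e.g. `ℓ(α_{(1,...,k)}) = 1 + k mod 2`). -/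
theorem pure_quasi_braid_length_one
    (φ : J 4 →* Equiv.Perm (Fin 4))
    (hφ : ∀ T : IntervalGen 4, φ (PresentedGroup.of T) = revPerm 4 T.1.1 T.1.2)
    (ℓ : J 4 →* Multiplicative (ZMod 2))
    (hℓ : ∀ T : IntervalGen 4, ℓ (PresentedGroup.of T) =
      Multiplicative.ofAdd (1 + ((T.1.2 - T.1.1 + 1 : ℕ) : ZMod 2)))
    (p : J 4)
    (hp : p = PresentedGroup.of ⟨(0, 2), by omega⟩ * PresentedGroup.of ⟨(0, 1), by omega⟩ *
      PresentedGroup.of ⟨(2, 3), by omega⟩ * PresentedGroup.of ⟨(0, 2), by omega⟩ *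
      PresentedGroup.of ⟨(0, 3), by omega⟩) :
    φ p = 1 ∧ ℓ p = Multiplicative.ofAdd 1 := by
  subst hp
  simp only [map_mul]
  -- `hp` elaborates its generators at the subtype underlying `IntervalGen 4`, so `hφ` and `hℓ`
  -- only match once instantiated at `IntervalGen 4` explicitly.
  rw [hφ ⟨(0, 2), by omega⟩, hφ ⟨(0, 1), by omega⟩, hφ ⟨(2, 3), by omega⟩, hφ ⟨(0, 3), by omega⟩,
    hℓ ⟨(0, 2), by omega⟩, hℓ ⟨(0, 1), by omega⟩, hℓ ⟨(2, 3), by omega⟩, hℓ ⟨(0, 3), by omega⟩]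
  exact ⟨by decide, by decide⟩
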